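/- Let Q and P be self-adjoint operators on a separable Hilbert space satisfying the Weyl relation e^{isQ} e^{itP} = e^{-iℏst} e^{itP} e^{isQ} for all s,t ∈ ℝ (with the representation irreducible on H = L²(ℝ), the Schrödinger representation). For bounded Borel sets S, T ⊆ ℝ, the operator A := E_Q(S) E_P(T) (product of spectral projections) is Hilbert–Schmidt, and Tr(A*A) = Leb(S)·Leb(T)/(2πℏ). -/

import Mathlib

/-!
`A = E_Q(S) E_P(T)` and `B = E_P(T) E_Q(S)` are adjoint to each other, so they have the same
Hilbert–Schmidt sum `∑ ‖A bᵢ‖² = ∑ ‖B bᵢ‖²`. After the Fourier–Plancherel map, `B g` is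
`p ↦ 1_T(p) (2πℏ)^(-1/2) ⟪e_p, g⟫` with the truncated plane wave `e_p = 1_S e^{ipx/ℏ}`, hence by
Parseval
`∑ ‖B bᵢ‖² = (2πℏ)⁻¹ ∫_T ∑ |⟪e_p, bᵢ⟫|² dp = (2πℏ)⁻¹ ∫_T ‖e_p‖² dp = |S| |T| / (2πℏ)`.
Computing in `ℝ≥0∞` makes all interchanges of sums and integrals unconditional; summability
then follows from finiteness of the result.
-/

open MeasureTheory Real
open scoped ENNReal InnerProductSpace

section InnerProduct

variable {𝕜 E ι : Type*} [RCLike 𝕜] [NormedAddCommGroup E] [InnerProductSpace 𝕜 E]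

theorem enorm_inner_comm (x y : E) : ‖⟪x, y⟫_𝕜‖ₑ = ‖⟪y, x⟫_𝕜‖ₑ := by
  rw [← ofReal_norm, norm_inner_symm, ofReal_norm]

namespace HilbertBasis

theorem countable_of_separableSpace [TopologicalSpace.SeparableSpace E]
    (b : HilbertBasis ι 𝕜 E) : Countable ι := by
  have hdist : Pairwise fun i j => 1 ≤ dist (b i) (b j) := by
    intro i j hij
    have h2 : dist (b i) (b j) ^ 2 = 2 := by
      rw [dist_eq_norm, @norm_sub_sq 𝕜, b.orthonormal.1 i, b.orthonormal.1 j,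
        b.orthonormal.2 hij]
      norm_num
    nlinarith [dist_nonneg (x := b i) (y := b j)]
  have hdisj :
      Pairwise fun i j => Disjoint (Metric.ball (b i) (1 / 2)) (Metric.ball (b j) (1 / 2)) :=
    fun i j hij => Metric.ball_disjoint_ball (by linarith [hdist hij])
  exact hdisj.countable_of_isOpen_disjoint (fun _ => Metric.isOpen_ball)
    (fun _ => Metric.nonempty_ball.2 (by norm_num))

theorem hasSum_norm_inner_sq (b : HilbertBasis ι 𝕜 E) (x : E) :
    HasSum (fun i => ‖⟪b i, x⟫_𝕜‖ ^ 2) (‖x‖ ^ 2) := by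
  have h := (b.hasSum_inner_mul_inner x x).mapL (RCLike.reCLM (K := 𝕜))
  have hterm : ∀ i, RCLike.re (⟪x, b i⟫_𝕜 * ⟪b i, x⟫_𝕜) = ‖⟪b i, x⟫_𝕜‖ ^ 2 := fun i => by
    rw [← inner_conj_symm (b i) x, RCLike.mul_conj, RCLike.norm_conj]
    norm_cast
  simpa only [RCLike.reCLM_apply, hterm, inner_self_eq_norm_sq] using h

theorem tsum_enorm_inner_sq (b : HilbertBasis ι 𝕜 E) (x : E) :
    ∑' i, ‖⟪b i, x⟫_𝕜‖ₑ ^ 2 = ‖x‖ₑ ^ 2 := by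
  simp_rw [← ofReal_norm, ← ENNReal.ofReal_pow (norm_nonneg _)]
  have h := b.hasSum_norm_inner_sq x
  rw [← ENNReal.ofReal_tsum_of_nonneg (fun _ => by positivity) h.summable, h.tsum_eq]

theorem tsum_enorm_sq_eq_of_inner_eq (b : HilbertBasis ι 𝕜 E) {A B : E → E}
    (hAB : ∀ x y, ⟪A x, y⟫_𝕜 = ⟪x, B y⟫_𝕜) :
    ∑' i, ‖A (b i)‖ₑ ^ 2 = ∑' i, ‖B (b i)‖ₑ ^ 2 := by
  calc ∑' i, ‖A (b i)‖ₑ ^ 2 = ∑' i, ∑' j, ‖⟪b j, A (b i)⟫_𝕜‖ₑ ^ 2 := by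
        simp only [b.tsum_enorm_inner_sq]
    _ = ∑' j, ∑' i, ‖⟪b i, B (b j)⟫_𝕜‖ₑ ^ 2 := by
        rw [ENNReal.tsum_comm]
        simp only [← enorm_inner_comm (A _), hAB]
    _ = ∑' j, ‖B (b j)‖ₑ ^ 2 := by simp only [b.tsum_enorm_inner_sq]

theorem tsum_lintegral_enorm_inner_sq [Countable ι] (b : HilbertBasis ι 𝕜 E) {X : Type*}
    [MeasurableSpace X] (ν : Measure X) {e : X → E}
    (he : ∀ x, Measurable fun p => ⟪e p, x⟫_𝕜) :
    ∑' i, ∫⁻ p, ‖⟪e p, b i⟫_𝕜‖ₑ ^ 2 ∂ν = ∫⁻ p, ‖e p‖ₑ ^ 2 ∂ν := by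
  rw [← lintegral_tsum fun i => ((he (b i)).enorm.pow_const 2).aemeasurable]
  simp only [enorm_inner_comm (e _), b.tsum_enorm_inner_sq]

end HilbertBasis

end InnerProduct

section L2

variable {α : Type*} [MeasurableSpace α] {μ : Measure α}

theorem MeasureTheory.Lp.enorm_sq_eq_lintegral {E : Type*} [NormedAddCommGroup E]
    {f : Lp E 2 μ} {g : α → E} (hfg : f =ᵐ[μ] g) :
    ‖f‖ₑ ^ 2 = ∫⁻ a, ‖g a‖ₑ ^ 2 ∂μ := by
  rw [Lp.enorm_def, eLpNorm_congr_ae hfg,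
    eLpNorm_eq_lintegral_rpow_enorm_toReal two_ne_zero ENNReal.ofNat_ne_top,
    ENNReal.toReal_ofNat, ← ENNReal.rpow_natCast, ← ENNReal.rpow_mul]
  norm_num

theorem MeasureTheory.Lp.enorm_sq_eq_setLIntegral {E : Type*} [NormedAddCommGroup E]
    {f : Lp E 2 μ} {T : Set α} (hT : MeasurableSet T) {g : α → E}
    (hfg : f =ᵐ[μ] T.indicator g) :
    ‖f‖ₑ ^ 2 = ∫⁻ a in T, ‖g a‖ₑ ^ 2 ∂μ := by
  rw [Lp.enorm_sq_eq_lintegral hfg, ← lintegral_indicator hT]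
  congr 1 with a
  by_cases ha : a ∈ T <;> simp [ha]

theorem MeasureTheory.L2.inner_eq_of_coeFn_eq_indicator {𝕜 E : Type*} [RCLike 𝕜]
    [NormedAddCommGroup E] [InnerProductSpace 𝕜 E] {U : Set α} {f f' g g' : Lp E 2 μ}
    (hf : f' =ᵐ[μ] U.indicator f) (hg : g' =ᵐ[μ] U.indicator g) :
    ⟪f', g⟫_𝕜 = ⟪f, g'⟫_𝕜 := by
  rw [L2.inner_def, L2.inner_def]
  refine integral_congr_ae ?_
  filter_upwards [hf, hg] with a hfa hga
  by_cases ha : a ∈ U <;> simp [hfa, hga, ha]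

theorem MeasureTheory.Lp.integrable_of_coeFn_eq_indicator {E : Type*} [NormedAddCommGroup E]
    {S : Set α} (hS : MeasurableSet S) (hμS : μ S ≠ ∞) {f g : Lp E 2 μ}
    (hfg : f =ᵐ[μ] S.indicator g) : Integrable f μ := by
  have : IsFiniteMeasure (μ.restrict S) := isFiniteMeasure_restrict.2 hμS
  refine Integrable.congr ?_ hfg.symm
  exact (integrable_indicator_iff hS).2 (((Lp.memLp g).restrict S).integrable one_le_two)

variable {k : α → ℂ} {S : Set α}

theorem memLp_indicator_star_of_norm_le_one (hk : AEStronglyMeasurable k μ)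
    (hk1 : ∀ x, ‖k x‖ ≤ 1) (hS : MeasurableSet S) (hμS : μ S ≠ ∞) :
    MemLp (S.indicator (star k)) 2 μ := by
  have : IsFiniteMeasure (μ.restrict S) := isFiniteMeasure_restrict.2 hμS
  refine (memLp_indicator_iff_restrict hS).2 (MemLp.of_bound hk.star.restrict 1 ?_)
  exact ae_of_all _ fun x => by simpa using hk1 x

theorem inner_toLp_indicator_star (hk : MemLp (S.indicator (star k)) 2 μ) (g : Lp ℂ 2 μ) :
    ⟪hk.toLp _, g⟫_ℂ = ∫ x, k x * S.indicator g x ∂μ := by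
  rw [L2.inner_def]
  refine integral_congr_ae ?_
  filter_upwards [hk.coeFn_toLp] with x hx
  by_cases hxS : x ∈ S <;> simp [hx, hxS, mul_comm]

theorem enorm_toLp_indicator_star_sq (hk1 : ∀ x, ‖k x‖ = 1) (hS : MeasurableSet S)
    (hk : MemLp (S.indicator (star k)) 2 μ) : ‖hk.toLp _‖ₑ ^ 2 = μ S := by
  rw [Lp.enorm_sq_eq_setLIntegral hS hk.coeFn_toLp]
  simp [← ofReal_norm, hk1]

end L2

theorem hasSum_norm_sq_of_tsum_enorm_sq {ι E : Type*} [SeminormedAddCommGroup E]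
    {v : ι → E} {a : ℝ≥0∞} (hv : ∑' i, ‖v i‖ₑ ^ 2 = a) (ha : a ≠ ∞) :
    HasSum (fun i => ‖v i‖ ^ 2) a.toReal := by
  have h := ENNReal.hasSum_toReal (hv ▸ ha)
  rw [← ENNReal.tsum_toReal_eq fun i => by finiteness, hv] at h
  simpa [ENNReal.toReal_pow] using h

noncomputable def fourierKernel (ℏ p x : ℝ) : ℂ :=
  Complex.exp (-(Complex.I * p * x) / ℏ)

theorem continuous_fourierKernel (ℏ : ℝ) :
    Continuous fun q : ℝ × ℝ => fourierKernel ℏ q.1 q.2 := by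
  unfold fourierKernel; fun_prop

theorem norm_fourierKernel (ℏ p x : ℝ) : ‖fourierKernel ℏ p x‖ = 1 := by
  rw [fourierKernel, Complex.norm_exp]
  simp [Complex.div_re]

section TruncatedPlaneWave

variable (ℏ : ℝ) {S : Set ℝ} (hS : MeasurableSet S) (hμS : volume S ≠ ∞)

noncomputable def truncatedPlaneWave (p : ℝ) : Lp ℂ 2 (volume : Measure ℝ) :=
  (memLp_indicator_star_of_norm_le_one
    ((continuous_fourierKernel ℏ).comp (Continuous.prodMk_right p)).aestronglyMeasurable
    (fun x => (norm_fourierKernel ℏ p x).le) hS hμS).toLp _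

theorem inner_truncatedPlaneWave (p : ℝ) (g : Lp ℂ 2 (volume : Measure ℝ)) :
    ⟪truncatedPlaneWave ℏ hS hμS p, g⟫_ℂ = ∫ x, fourierKernel ℏ p x * S.indicator g x :=
  inner_toLp_indicator_star _ g

theorem enorm_truncatedPlaneWave_sq (p : ℝ) :
    ‖truncatedPlaneWave ℏ hS hμS p‖ₑ ^ 2 = volume S :=
  enorm_toLp_indicator_star_sq (norm_fourierKernel ℏ p) hS _

theorem measurable_inner_truncatedPlaneWave (g : Lp ℂ 2 (volume : Measure ℝ)) :
    Measurable fun p => ⟪truncatedPlaneWave ℏ hS hμS p, g⟫_ℂ := by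
  have hker : StronglyMeasurable fun q : ℝ × ℝ => fourierKernel ℏ q.1 q.2 * S.indicator g q.2 :=
    (continuous_fourierKernel ℏ).stronglyMeasurable.mul
      (((Lp.stronglyMeasurable g).indicator hS).comp_measurable measurable_snd)
  simpa only [inner_truncatedPlaneWave] using hker.integral_prod_right'.measurable

end TruncatedPlaneWave

theorem trace_EQ_EP_mul
    (ℏ : ℝ) (hℏ : 0 < ℏ)
    (S T : Set ℝ) (hSm : MeasurableSet S) (hTm : MeasurableSet T)
    (hSb : Bornology.IsBounded S) (hTb : Bornology.IsBounded T)
    (EQ EP : Set ℝ → (Lp ℂ 2 (volume : Measure ℝ) →L[ℂ] Lp ℂ 2 (volume : Measure ℝ)))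
    (hEQ : ∀ U : Set ℝ, MeasurableSet U → ∀ f : Lp ℂ 2 (volume : Measure ℝ),
      ⇑(EQ U f) =ᵐ[volume] U.indicator ⇑f)
    (F : Lp ℂ 2 (volume : Measure ℝ) ≃ₗᵢ[ℂ] Lp ℂ 2 (volume : Measure ℝ))
    (hF : ∀ f : Lp ℂ 2 (volume : Measure ℝ), Integrable ⇑f → ⇑(F f) =ᵐ[volume]
      fun p : ℝ => ((Real.sqrt (2 * π * ℏ) : ℂ))⁻¹ *
        ∫ x : ℝ, Complex.exp (-(Complex.I * (p : ℂ) * (x : ℂ)) / (ℏ : ℂ)) * f x)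
    (hEP : ∀ U : Set ℝ, MeasurableSet U → ∀ f : Lp ℂ 2 (volume : Measure ℝ),
      ⇑(F (EP U f)) =ᵐ[volume] U.indicator ⇑(F f)) :
    ∀ {ι : Type} (b : HilbertBasis ι ℂ (Lp ℂ 2 (volume : Measure ℝ))),
      Summable (fun i => ‖((EQ S).comp (EP T)) (b i)‖ ^ 2) ∧
      ∑' i, ‖((EQ S).comp (EP T)) (b i)‖ ^ 2
        = (volume S).toReal * (volume T).toReal / (2 * π * ℏ) := by
  intro ι b
  -- needed to find the separability instance of `L²`
  have : Fact ((2 : ℝ≥0∞) ≠ ∞) := ⟨ENNReal.ofNat_ne_top⟩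
  have : Countable ι := b.countable_of_separableSpace
  have hμS : volume S ≠ ∞ := hSb.measure_lt_top.ne
  set c : ℂ := (Real.sqrt (2 * π * ℏ) : ℂ)⁻¹
  have hFEQ (g : Lp ℂ 2 (volume : Measure ℝ)) :
      F (EQ S g) =ᵐ[volume] fun p => c * ⟪truncatedPlaneWave ℏ hSm hμS p, g⟫_ℂ :=
    (hF _ (Lp.integrable_of_coeFn_eq_indicator hSm hμS (hEQ S hSm g))).trans <|
      ae_of_all _ fun p => by
        simp only [inner_truncatedPlaneWave]
        exact congrArg _ (integral_congr_ae (.mul .rfl (hEQ S hSm g)))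
  have hadj (f g : Lp ℂ 2 (volume : Measure ℝ)) :
      ⟪(EQ S).comp (EP T) f, g⟫_ℂ = ⟪f, EP T (EQ S g)⟫_ℂ := by
    rw [ContinuousLinearMap.comp_apply,
      L2.inner_eq_of_coeFn_eq_indicator (hEQ S hSm _) (hEQ S hSm g),
      ← F.inner_map_map, ← F.inner_map_map f,
      L2.inner_eq_of_coeFn_eq_indicator (hEP T hTm _) (hEP T hTm _)]
  have hnorm (g : Lp ℂ 2 (volume : Measure ℝ)) : ‖EP T (EQ S g)‖ₑ ^ 2 =
      ‖c‖ₑ ^ 2 * ∫⁻ p in T, ‖⟪truncatedPlaneWave ℏ hSm hμS p, g⟫_ℂ‖ₑ ^ 2 := by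
    rw [← F.enorm_map, Lp.enorm_sq_eq_setLIntegral hTm (hEP T hTm _),
      ← lintegral_const_mul' _ _ (by finiteness)]
    exact lintegral_congr_ae <| ae_restrict_of_ae <| (hFEQ g).mono fun p hp => by
      simp only [hp, enorm_mul, mul_pow]
  have key : ∑' i, ‖(EQ S).comp (EP T) (b i)‖ₑ ^ 2 = ‖c‖ₑ ^ 2 * (volume S * volume T) := by
    rw [b.tsum_enorm_sq_eq_of_inner_eq hadj]
    simp_rw [hnorm, ENNReal.tsum_mul_left,
      b.tsum_lintegral_enorm_inner_sq _ (measurable_inner_truncatedPlaneWave ℏ hSm hμS),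
      enorm_truncatedPlaneWave_sq, setLIntegral_const]
  have hsum := hasSum_norm_sq_of_tsum_enorm_sq key
    (by finiteness [hTb.measure_lt_top (μ := volume)])
  refine ⟨hsum.summable, hsum.tsum_eq.trans ?_⟩
  have h2πℏ : 0 ≤ 2 * π * ℏ := by positivity
  simp only [c, ENNReal.toReal_mul, ENNReal.toReal_pow, toReal_enorm, norm_inv, Complex.norm_real,
    Real.norm_of_nonneg (Real.sqrt_nonneg _), inv_pow, Real.sq_sqrt h2πℏ]
  ring
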